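/- Let N ≥ 3, 1 < k < N-1, p > 0 and c > 0. Let v : ℝ^{N-1} → [0,∞] be measurable with v > 0 a.e., v(x') < ∞ for a.e. x' ∈ ℝ^{N-1}, and v(x') ≥ c ∫_{ℝ^{N-1}} v(y')^p |x'-y'|^{-(k-1)} dy' for a.e. x' ∈ ℝ^{N-1}. Then v^p is integrable on the unit ball of ℝ^{N-1}, and there exists a constant C > 0 such that v(x') ≥ C |x'|^{1-k} for a.e. x' ∈ ℝ^{N-1} with |x'| > 1. -/

import Mathlib

/-! At a point `a` where the inequality holds and `v a < ∞`, the potential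
`∫ v(y)^p |a - y|^{1-k} dy` is finite; as the kernel is bounded below on the unit ball `B`,
`∫_B v^p < ∞`. For `|x| > 1` the kernel is at least `(2|x|)^{1-k}` on `B`, whence
`v x ≥ c (2|x|)^{1-k} ∫_B v^p`, and `∫_B v^p > 0` because `0 < v < ∞` a.e. -/

open MeasureTheory ENNReal Filter

noncomputable section

/-- The point `(y', t) ∈ ℝ^N` for `y' ∈ ℝ^{N-1}`, `t ∈ ℝ`. -/
def up (N : ℕ) (y' : EuclideanSpace ℝ (Fin (N - 1))) (t : ℝ) : EuclideanSpace ℝ (Fin N) :=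
  (WithLp.equiv 2 (Fin N → ℝ)).symm fun i => if h : (i : ℕ) < N - 1 then y' ⟨i, h⟩ else t

/-- The last coordinate `x_N` of `x ∈ ℝ^N`. -/
def ht (N : ℕ) (x : EuclideanSpace ℝ (Fin N)) : ℝ :=
  if h : N - 1 < N then x ⟨N - 1, h⟩ else 0

/-- Reflection `x̄ = (x', -x_N)` of `x = (x', x_N)` in the hyperplane `x_N = 0`. -/
def reflN (N : ℕ) (x : EuclideanSpace ℝ (Fin N)) : EuclideanSpace ℝ (Fin N) :=
  (WithLp.equiv 2 (Fin N → ℝ)).symm fun i => if (i : ℕ) < N - 1 then x i else -x i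

/-- Surface area `σ_N` of the unit sphere in `ℝ^N` (equal to `N` times the unit ball volume). -/
def sphereArea (N : ℕ) : ℝ :=
  N * (volume (Metric.ball (0 : EuclideanSpace ℝ (Fin N)) 1)).toReal

/-- The open upper half space `ℝ^N_+ = ℝ^{N-1} × (0,∞)`. -/
def upperHalf (N : ℕ) : Set (EuclideanSpace ℝ (Fin N)) := {x | 0 < ht N x}

/-- `H_u(x') = ∫_{ℝ^{N-1}} u(y',0)^p |x'-y'|^{-k} dy'`. -/
def Hu (N : ℕ) (p k : ℝ) (u : EuclideanSpace ℝ (Fin N) → ℝ)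
    (x' : EuclideanSpace ℝ (Fin (N - 1))) : ℝ≥0∞ :=
  ∫⁻ y', ENNReal.ofReal (u (up N y' 0)) ^ p * ENNReal.ofReal ‖x' - y'‖ ^ (-k)

/-- The Newtonian potential `U^ν(x) = (1/((N-2)σ_N)) ∫ |x-y|^{2-N} dν(y)`. -/
def NewtPot (N : ℕ) (ν : Measure (EuclideanSpace ℝ (Fin N)))
    (x : EuclideanSpace ℝ (Fin N)) : ℝ :=
  (((N : ℝ) - 2) * sphereArea N)⁻¹ * (∫⁻ y, ENNReal.ofReal ‖x - y‖ ^ ((2:ℝ) - N) ∂ν).toReal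

/-- The Green potential `∫_{ℝ^N_+} G(x,y) dμ(y)` for the Neumann Green function
`G(x,y) = (|x-y|^{2-N} + |x̄-y|^{2-N})/((N-2)σ_N)` of the half space. -/
def GreenPot (N : ℕ) (μ : Measure (EuclideanSpace ℝ (Fin N)))
    (x : EuclideanSpace ℝ (Fin N)) : ℝ :=
  (((N : ℝ) - 2) * sphereArea N)⁻¹ *
    (∫⁻ y, (ENNReal.ofReal ‖x - y‖ ^ ((2:ℝ) - N)
          + ENNReal.ofReal ‖reflN N x - y‖ ^ ((2:ℝ) - N)) ∂μ).toReal

/-- `μ` is a nonzero Radon (locally finite Borel) measure whose support is contained in the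
open upper half space and whose Newtonian potential is finite everywhere. -/
def AdmissibleMeasure (N : ℕ) (μ : Measure (EuclideanSpace ℝ (Fin N))) : Prop :=
  μ ≠ 0 ∧ IsLocallyFiniteMeasure μ ∧
    (∃ F : Set (EuclideanSpace ℝ (Fin N)), IsClosed F ∧ F ⊆ upperHalf N ∧ μ Fᶜ = 0) ∧
    (∀ x, (∫⁻ y, ENNReal.ofReal ‖x - y‖ ^ ((2:ℝ) - N) ∂μ) < ⊤)

/-- A measurable function `u` is a positive solution of problem (1.1):
(i) `u > 0` a.e. in `ℝ^N_+`, and for a.e. `x' ∈ ℝ^{N-1}`, `u(z) → u(x',0)` as `z → (x',0)`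
with `z ∈ ℝ^N_+`;
(ii) `H_u < ∞` a.e. in `ℝ^{N-1}`, and `∫_{ℝ^{N-1}} H_u(y')|x-(y',0)|^{2-N} dy' < ∞` for
a.e. `x ∈ ℝ^N_+`;
(iii) `u(x) = ∫_{ℝ^N_+} G(x,y) dμ(y)
　　　　+ (2λ/((N-2)σ_N)) ∫∫ u(z',0)^p |x-(y',0)|^{2-N} |y'-z'|^{-k} dz' dy'`
for a.e. `x ∈ ℝ^N_+`. -/
def IsPosSolution (N : ℕ) (p lam k : ℝ) (μ : Measure (EuclideanSpace ℝ (Fin N)))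
    (u : EuclideanSpace ℝ (Fin N) → ℝ) : Prop :=
  Measurable u ∧
  (∀ᵐ x ∂(volume.restrict (upperHalf N)), 0 < u x) ∧
  (∀ᵐ x' ∂(volume : Measure (EuclideanSpace ℝ (Fin (N - 1)))),
    Tendsto u (nhdsWithin (up N x' 0) (upperHalf N)) (nhds (u (up N x' 0)))) ∧
  (∀ᵐ x' ∂(volume : Measure (EuclideanSpace ℝ (Fin (N - 1)))), Hu N p k u x' < ⊤) ∧
  (∀ᵐ x ∂(volume.restrict (upperHalf N)),
    (∫⁻ y', Hu N p k u y' * ENNReal.ofReal ‖x - up N y' 0‖ ^ ((2:ℝ) - N)) < ⊤) ∧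
  (∀ᵐ x ∂(volume.restrict (upperHalf N)),
    ENNReal.ofReal (u x) =
      ENNReal.ofReal (((N : ℝ) - 2) * sphereArea N)⁻¹ *
        (∫⁻ y, (ENNReal.ofReal ‖x - y‖ ^ ((2:ℝ) - N)
              + ENNReal.ofReal ‖reflN N x - y‖ ^ ((2:ℝ) - N)) ∂μ) +
      ENNReal.ofReal (2 * lam / (((N : ℝ) - 2) * sphereArea N)) *
        ∫⁻ y', ENNReal.ofReal ‖x - up N y' 0‖ ^ ((2:ℝ) - N) * Hu N p k u y')

/-- A measurable function `u` is a positive solution of problem (1.1) with `μ ≡ 0`: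
conditions (i), (ii) as above and
(iii) `u(x) = (2λ/((N-2)σ_N)) ∫∫ u(z',0)^p |x-(y',0)|^{2-N} |y'-z'|^{-k} dz' dy'`
for a.e. `x ∈ ℝ^N_+`. -/
def IsPosSolution0 (N : ℕ) (p lam k : ℝ) (u : EuclideanSpace ℝ (Fin N) → ℝ) : Prop :=
  Measurable u ∧
  (∀ᵐ x ∂(volume.restrict (upperHalf N)), 0 < u x) ∧
  (∀ᵐ x' ∂(volume : Measure (EuclideanSpace ℝ (Fin (N - 1)))),
    Tendsto u (nhdsWithin (up N x' 0) (upperHalf N)) (nhds (u (up N x' 0)))) ∧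
  (∀ᵐ x' ∂(volume : Measure (EuclideanSpace ℝ (Fin (N - 1)))), Hu N p k u x' < ⊤) ∧
  (∀ᵐ x ∂(volume.restrict (upperHalf N)),
    (∫⁻ y', Hu N p k u y' * ENNReal.ofReal ‖x - up N y' 0‖ ^ ((2:ℝ) - N)) < ⊤) ∧
  (∀ᵐ x ∂(volume.restrict (upperHalf N)),
    ENNReal.ofReal (u x) =
      ENNReal.ofReal (2 * lam / (((N : ℝ) - 2) * sphereArea N)) *
        ∫⁻ y', ENNReal.ofReal ‖x - up N y' 0‖ ^ ((2:ℝ) - N) * Hu N p k u y')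

/-- The boundary trace `x' ↦ u(x',0)` belongs to `L^q_loc(ℝ^{N-1})`. -/
def BdryLocLp (N : ℕ) (q : ℝ) (u : EuclideanSpace ℝ (Fin N) → ℝ) : Prop :=
  ∀ K : Set (EuclideanSpace ℝ (Fin (N - 1))), IsCompact K →
    MemLp (fun x' => u (up N x' 0)) (ENNReal.ofReal q) (volume.restrict K)


open Metric

lemma ENNReal.rpow_neg_le_rpow_neg {x y : ℝ≥0∞} {s : ℝ} (hs : 0 ≤ s) (hxy : x ≤ y) :
    y ^ (-s) ≤ x ^ (-s) := by
  rw [ENNReal.rpow_neg, ENNReal.rpow_neg]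
  exact ENNReal.inv_le_inv.mpr (ENNReal.rpow_le_rpow hxy hs)

lemma MeasureTheory.lintegral_pos_of_ae_pos {α : Type*} [MeasurableSpace α] {μ : Measure α}
    {f : α → ℝ≥0∞} (hf : AEMeasurable f μ) (hμ : μ ≠ 0) (h : ∀ᵐ x ∂μ, 0 < f x) :
    0 < ∫⁻ x, f x ∂μ := by
  refine pos_iff_ne_zero.2 fun h0 => hμ ?_
  rw [← ae_eq_bot, ← eventually_false_iff_eq_bot]
  filter_upwards [h, (lintegral_eq_zero_iff' hf).1 h0] with x hpos hzero
  exact hpos.ne' hzero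

def rieszPotential {E : Type*} [NormedAddCommGroup E] [MeasurableSpace E] (μ : Measure E)
    (s : ℝ) (f : E → ℝ≥0∞) (x : E) : ℝ≥0∞ :=
  ∫⁻ y, f y * ENNReal.ofReal ‖x - y‖ ^ (-s) ∂μ

section RieszPotential

variable {E : Type*} [NormedAddCommGroup E] [MeasurableSpace E] [OpensMeasurableSpace E]
  {μ : Measure E} {s : ℝ} {f : E → ℝ≥0∞}

lemma rpow_neg_mul_setLIntegral_ball_le_rieszPotential (hs : 0 ≤ s) (a b : E) (R : ℝ) :
    ENNReal.ofReal (dist a b + R) ^ (-s) * ∫⁻ y in ball b R, f y ∂μ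
      ≤ rieszPotential μ s f a := by
  have kernel_ge : ∀ y ∈ ball b R,
      ENNReal.ofReal (dist a b + R) ^ (-s) * f y ≤ f y * ENNReal.ofReal ‖a - y‖ ^ (-s) := by
    intro y hy
    rw [mul_comm]
    refine mul_le_mul_right (ENNReal.rpow_neg_le_rpow_neg hs (ENNReal.ofReal_le_ofReal ?_)) _
    rw [← dist_eq_norm]
    linarith [dist_triangle a b y, mem_ball'.1 hy]
  calc ENNReal.ofReal (dist a b + R) ^ (-s) * ∫⁻ y in ball b R, f y ∂μ
      ≤ ∫⁻ y in ball b R, ENNReal.ofReal (dist a b + R) ^ (-s) * f y ∂μ :=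
        lintegral_const_mul_le _ _
    _ ≤ ∫⁻ y in ball b R, f y * ENNReal.ofReal ‖a - y‖ ^ (-s) ∂μ :=
        setLIntegral_mono' measurableSet_ball kernel_ge
    _ ≤ rieszPotential μ s f a := setLIntegral_le_lintegral _ _

lemma setLIntegral_ball_lt_top_of_rieszPotential_lt_top (hs : 0 ≤ s) {a : E}
    (ha : rieszPotential μ s f a < ⊤) (b : E) (R : ℝ) :
    ∫⁻ y in ball b R, f y ∂μ < ⊤ := by
  have hM : ENNReal.ofReal (dist a b + R) ^ (-s) ≠ 0 := by
    simp [ENNReal.rpow_eq_zero_iff, hs]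
  exact ENNReal.lt_top_of_mul_ne_top_right
    ((rpow_neg_mul_setLIntegral_ball_le_rieszPotential hs a b R).trans_lt ha).ne hM

lemma ofReal_mul_norm_rpow_neg_le_rieszPotential (hs : 0 ≤ s) {R : ℝ} {x : E}
    (hx : 0 < ‖x‖) (hRx : R ≤ ‖x‖) :
    ENNReal.ofReal (2 ^ (-s) * (∫⁻ y in ball 0 R, f y ∂μ).toReal * ‖x‖ ^ (-s))
      ≤ rieszPotential μ s f x := by
  set I := ∫⁻ y in ball 0 R, f y ∂μ
  calc ENNReal.ofReal (2 ^ (-s) * I.toReal * ‖x‖ ^ (-s))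
      = ENNReal.ofReal (2 * ‖x‖) ^ (-s) * ENNReal.ofReal I.toReal := by
        rw [ENNReal.ofReal_rpow_of_pos (by positivity : (0 : ℝ) < 2 * ‖x‖),
          ← ENNReal.ofReal_mul (by positivity),
          Real.mul_rpow zero_le_two hx.le]
        ring_nf
    _ ≤ ENNReal.ofReal (dist x 0 + R) ^ (-s) * I := by
        refine mul_le_mul' (ENNReal.rpow_neg_le_rpow_neg hs (ENNReal.ofReal_le_ofReal ?_))
          ENNReal.ofReal_toReal_le
        rw [dist_zero_right]
        linarith
    _ ≤ rieszPotential μ s f x := rpow_neg_mul_setLIntegral_ball_le_rieszPotential hs x 0 R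

end RieszPotential

theorem lower_bound_lemma_general
    (N : ℕ) (k p c : ℝ)
    (hk1 : 1 < k) (hc : 0 < c)
    (v : EuclideanSpace ℝ (Fin (N - 1)) → ℝ≥0∞) (hv : Measurable v)
    (hpos : ∀ᵐ x' ∂(volume : Measure (EuclideanSpace ℝ (Fin (N - 1)))), 0 < v x')
    (hfin : ∀ᵐ x' ∂(volume : Measure (EuclideanSpace ℝ (Fin (N - 1)))), v x' < ⊤)
    (hineq : ∀ᵐ x' ∂(volume : Measure (EuclideanSpace ℝ (Fin (N - 1)))),
      ENNReal.ofReal c * ∫⁻ y', v y' ^ p * ENNReal.ofReal ‖x' - y'‖ ^ (-(k - 1)) ≤ v x') :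
    (∫⁻ y' in Metric.ball (0 : EuclideanSpace ℝ (Fin (N - 1))) 1, v y' ^ p) < ⊤ ∧
      ∃ C > 0, ∀ᵐ x' ∂(volume : Measure (EuclideanSpace ℝ (Fin (N - 1)))),
        1 < ‖x'‖ → ENNReal.ofReal (C * ‖x'‖ ^ (1 - k)) ≤ v x' := by
  have hs : 0 ≤ k - 1 := by linarith
  have hineq : ∀ᵐ x' ∂volume,
      ENNReal.ofReal c * rieszPotential volume (k - 1) (fun y' => v y' ^ p) x' ≤ v x' := hineq
  obtain ⟨a, ha_fin, ha_ineq⟩ := (hfin.and hineq).exists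
  have ha : rieszPotential volume (k - 1) (fun y' => v y' ^ p) a < ⊤ :=
    ENNReal.lt_top_of_mul_ne_top_right (ha_ineq.trans_lt ha_fin).ne (by simpa using hc)
  have hI_fin := setLIntegral_ball_lt_top_of_rieszPotential_lt_top hs ha 0 1
  refine ⟨hI_fin, ?_⟩
  set I := ∫⁻ y' in ball (0 : EuclideanSpace ℝ (Fin (N - 1))) 1, v y' ^ p
  have hI_pos : 0 < I := by
    refine lintegral_pos_of_ae_pos (hv.pow_const p).aemeasurable ?_ ?_
    · simpa [Measure.restrict_eq_zero] using (measure_ball_pos volume (0 : _) one_pos).ne'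
    · filter_upwards [ae_restrict_of_ae hpos, ae_restrict_of_ae hfin] with y hy0 hytop
      exact ENNReal.rpow_pos hy0 hytop.ne
  have hI_real : 0 < I.toReal := ENNReal.toReal_pos hI_pos.ne' hI_fin.ne
  refine ⟨c * (2 ^ (-(k - 1)) * I.toReal), by positivity, ?_⟩
  filter_upwards [hineq] with x hx hx1
  calc ENNReal.ofReal (c * (2 ^ (-(k - 1)) * I.toReal) * ‖x‖ ^ (1 - k))
      = ENNReal.ofReal c * ENNReal.ofReal (2 ^ (-(k - 1)) * I.toReal * ‖x‖ ^ (-(k - 1))) := by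
        rw [neg_sub, ← ENNReal.ofReal_mul hc.le, mul_assoc]
    _ ≤ ENNReal.ofReal c * rieszPotential volume (k - 1) (fun y' => v y' ^ p) x := by
        gcongr
        exact ofReal_mul_norm_rpow_neg_le_rieszPotential hs (by linarith) hx1.le
    _ ≤ v x := hx

/-- Lemma 3.1 (together with (3.5)): if `v : ℝ^{N-1} → [0,∞]` is measurable, a.e. positive
and finite, and satisfies `v(x') ≥ c ∫ v(y')^p |x'-y'|^{-(k-1)} dy'` a.e., then `v^p` is
integrable on the unit ball and there is `C > 0` with `v(x') ≥ C|x'|^{1-k}` for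
a.e. `|x'| > 1`. -/
theorem lower_bound_lemma
    (N : ℕ) (hN : 3 ≤ N) (k p c : ℝ)
    (hk1 : 1 < k) (hkN : k < (N : ℝ) - 1) (hp : 0 < p) (hc : 0 < c)
    (v : EuclideanSpace ℝ (Fin (N - 1)) → ℝ≥0∞) (hv : Measurable v)
    (hpos : ∀ᵐ x' ∂(volume : Measure (EuclideanSpace ℝ (Fin (N - 1)))), 0 < v x')
    (hfin : ∀ᵐ x' ∂(volume : Measure (EuclideanSpace ℝ (Fin (N - 1)))), v x' < ⊤)
    (hineq : ∀ᵐ x' ∂(volume : Measure (EuclideanSpace ℝ (Fin (N - 1)))),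
      ENNReal.ofReal c * ∫⁻ y', v y' ^ p * ENNReal.ofReal ‖x' - y'‖ ^ (-(k - 1)) ≤ v x') :
    (∫⁻ y' in Metric.ball (0 : EuclideanSpace ℝ (Fin (N - 1))) 1, v y' ^ p) < ⊤ ∧
      ∃ C > 0, ∀ᵐ x' ∂(volume : Measure (EuclideanSpace ℝ (Fin (N - 1)))),
        1 < ‖x'‖ → ENNReal.ofReal (C * ‖x'‖ ^ (1 - k)) ≤ v x' :=
  lower_bound_lemma_general N k p c hk1 hc v hv hpos hfin hineq

end
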